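/- arXiv:2107.07120 — 10 statements merged into one kernel-verified Lean document; each statement's English description precedes it below -/
import Mathlib

section
/- For words u, v over an alphabet A, the identity u ≈ v holds in every monoid satisfying x·y = x·y·x if and only if ini(u) = ini(v), where ini(w) is the word obtained from w by retaining only the first occurrence of each letter. -/
/-!
In a monoid with `x * y = x * y * x`, a letter occurring again after its first occurrence can be
deleted: `f a * y * f a = f a * y`. Hence every word evaluates like its `ini`. Conversely, lists
under `x * y = x ++ (letters of y not in x)` form a monoid satisfying the law, in which the word
`w` evaluates to `ini w` under `a ↦ [a]`.
-/

/-- `ini w` is the word obtained from `w` by retaining only the first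
occurrence of each letter. -/
def ini {A : Type} [DecidableEq A] : List A → List A
  | [] => []
  | a :: l => a :: ini (l.filter (· ≠ a))
termination_by w => w.length
decreasing_by
  simp only [List.length_cons]
  exact Nat.lt_succ_of_le (by
    first
    | exact (List.length_unattach).le.trans ((List.length_filter_le _ _).trans List.length_attach.le)
    | simpa using List.length_filter_le _ l.attach
    | simp [List.length_filter_le])

variable {A : Type}

section ini

variable [DecidableEq A]

theorem ini_cons (a : A) (l : List A) : ini (a :: l) = a :: ini (l.filter (· ≠ a)) := by
  rw [ini]

@[elab_as_elim]
theorem ini_induction {motive : List A → Prop} (nil : motive [])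
    (cons : ∀ a l, motive (l.filter (· ≠ a)) → motive (a :: l)) (l : List A) : motive l :=
  ini.induct motive nil (fun a l ih => cons a l <| by
    rwa [List.unattach_filter (g := fun x => decide (x ≠ a)) (hf := fun _ _ => rfl),
      List.unattach_attach] at ih) l

end ini

section LeftRegular

variable {M : Type*} [Monoid M]

theorem mul_prod_map_filter {f : A → M} {p : A → Bool} {x : M}
    (hx : ∀ a, p a = false → ∀ y, x * y * f a = x * y) (l : List A) (y : M) :
    x * y * (l.map f).prod = x * y * ((l.filter p).map f).prod := by
  induction l generalizing y with
  | nil => rfl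
  | cons b l ih =>
    cases hb : p b
    · rw [List.filter_cons_of_neg (by simp [hb]), ← ih, List.map_cons, List.prod_cons,
        ← mul_assoc, hx b hb]
    · rw [List.filter_cons_of_pos hb, List.map_cons, List.map_cons, List.prod_cons,
        List.prod_cons, ← mul_assoc, ← mul_assoc, mul_assoc x y, ih]

theorem prod_map_ini [DecidableEq A] (hM : ∀ x y : M, x * y = x * y * x) (f : A → M)
    (w : List A) : (w.map f).prod = ((ini w).map f).prod := by
  induction w using ini_induction with
  | nil => rw [ini]
  | cons a l ih =>
    have hdel : f a * (l.map f).prod = f a * ((l.filter (· ≠ a)).map f).prod := by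
      simpa using mul_prod_map_filter (f := f) (p := (· ≠ a)) (x := f a)
        (fun b hb y => by simp only [decide_eq_false_iff_not, not_not] at hb; rw [hb, ← hM]) l 1
    rw [ini_cons, List.map_cons, List.prod_cons, hdel, ih, List.map_cons, List.prod_cons]

end LeftRegular

section appendNew

variable [DecidableEq A]

def appendNew (x y : List A) : List A := x ++ y.filter (· ∉ x)

theorem nil_appendNew (y : List A) : appendNew [] y = y := by
  simp [appendNew]

theorem appendNew_nil (x : List A) : appendNew x [] = x := by
  simp [appendNew]

theorem appendNew_assoc (x y z : List A) :
    appendNew (appendNew x y) z = appendNew x (appendNew y z) := by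
  simp only [appendNew, List.filter_append, List.filter_filter, List.append_assoc]
  congr 2
  refine List.filter_congr fun a _ => ?_
  by_cases hx : a ∈ x <;> by_cases hy : a ∈ y <;> simp [hx, hy]

theorem appendNew_appendNew_self (x y : List A) : appendNew (appendNew x y) x = appendNew x y := by
  simp +contextual [appendNew]

theorem filter_appendNew (p : A → Bool) (x y : List A) :
    (appendNew x y).filter p = appendNew (x.filter p) (y.filter p) := by
  simp only [appendNew, List.filter_append, List.filter_filter]
  congr 1
  refine List.filter_congr fun a _ => ?_
  by_cases ha : p a <;> simp [ha]

theorem singleton_appendNew (a : A) (y : List A) :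
    appendNew [a] y = a :: y.filter (· ≠ a) := by
  simp [appendNew]

end appendNew

-- On duplicate-free lists this is the free left regular band monoid.
def LeftRegularList (A : Type) : Type := List A

namespace LeftRegularList

def of (a : A) : LeftRegularList A := [a]

def toList (x : LeftRegularList A) : List A := x

theorem toList_of (a : A) : (of a).toList = [a] :=
  rfl

variable [DecidableEq A]

instance : Monoid (LeftRegularList A) where
  mul := appendNew
  one := ([] : List A)
  mul_assoc := appendNew_assoc
  one_mul := nil_appendNew
  mul_one := appendNew_nil

theorem toList_mul (x y : LeftRegularList A) : (x * y).toList = appendNew x.toList y.toList :=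
  rfl

theorem mul_eq_mul_mul_self (x y : LeftRegularList A) : x * y = x * y * x :=
  (appendNew_appendNew_self x y).symm

theorem toList_prod_map_of_filter (p : A → Bool) (w : List A) :
    ((w.filter p).map of).prod.toList = (w.map of).prod.toList.filter p := by
  induction w with
  | nil => rfl
  | cons b l ih =>
    rw [List.map_cons, List.prod_cons, toList_mul, filter_appendNew, ← ih, toList_of,
      List.filter_singleton]
    cases hb : p b
    · rw [List.filter_cons_of_neg (by simp [hb]), cond_false, nil_appendNew]
    · rw [List.filter_cons_of_pos hb, List.map_cons, List.prod_cons, toList_mul, toList_of,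
        cond_true]

theorem toList_prod_map_of (w : List A) : (w.map of).prod.toList = ini w := by
  induction w using ini_induction with
  | nil => rw [ini]; rfl
  | cons a l ih =>
    rw [List.map_cons, List.prod_cons, toList_mul, ini_cons, ← ih, toList_prod_map_of_filter,
      toList_of, singleton_appendNew]

end LeftRegularList

theorem stmt2 {A : Type} [DecidableEq A] (u v : List A) :
    (∀ (M : Type) [Monoid M], (∀ x y : M, x * y = x * y * x) →
      ∀ f : A → M, (u.map f).prod = (v.map f).prod) ↔ ini u = ini v := by
  constructor
  · intro h
    have := congrArg LeftRegularList.toList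
      (h (LeftRegularList A) LeftRegularList.mul_eq_mul_mul_self LeftRegularList.of)
    rwa [LeftRegularList.toList_prod_map_of, LeftRegularList.toList_prod_map_of] at this
  · intro h M _ hM f
    rw [prod_map_ini hM f u, prod_map_ini hM f v, h]
end

section
/- Let M be a monoid satisfying x·s·x·t = x·s·x·t·x for all x, s, t ∈ M. Then for every word w over an alphabet A and every map f : A → M, the evaluation of w in M equals the evaluation of ini₂(w) in M, where ini₂(w) is obtained from w by retaining only the first and second occurrences of each letter. -/
/-- Auxiliary function: `ini2Go seen w` retains an occurrence of a letter `a`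
of `w` as long as fewer than `2 - seen a` occurrences of `a` have been kept so
far (where `seen` records how many occurrences were already seen). -/
def ini2Go {A : Type} [DecidableEq A] : (A → ℕ) → List A → List A
  | _, [] => []
  | seen, a :: l =>
      if seen a < 2 then a :: ini2Go (Function.update seen a (seen a + 1)) l
      else ini2Go seen l

/-- `ini2 w` is the word obtained from `w` by retaining only the first and the
second occurrences of each letter. -/
def ini2 {A : Type} [DecidableEq A] (w : List A) : List A :=
  ini2Go (fun _ => 0) w

theorem ini2_aux {A : Type} [DecidableEq A] {M : Type*} [Monoid M]
    (h : ∀ x s t : M, x * s * x * t = x * s * x * t * x) (f : A → M) :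
    ∀ (w : List A) (seen : A → ℕ) (p : M),
      (∀ a, 1 ≤ seen a → ∃ u v : M, p = u * f a * v) →
      (∀ a, 2 ≤ seen a → ∀ q, p * q * f a = p * q) →
      p * (w.map f).prod = p * ((ini2Go seen w).map f).prod := by
  intro w
  induction w with
  | nil => intro seen p _ _; simp [ini2Go]
  | cons a l ih =>
      intro seen p h1 h2
      by_cases hc : seen a < 2
      · rw [ini2Go, if_pos hc]
        simp only [List.map_cons, List.prod_cons, ← mul_assoc]
        apply ih
        · intro b hb
          by_cases hba : b = a
          · subst hba
            exact ⟨p, 1, by rw [mul_one]⟩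
          · rw [Function.update_of_ne hba] at hb
            obtain ⟨u, v, huv⟩ := h1 b hb
            exact ⟨u, v * f a, by rw [huv, mul_assoc]⟩
        · intro b hb q
          by_cases hba : b = a
          · subst hba
            rw [Function.update_self] at hb
            have hb1 : 1 ≤ seen b := by omega
            obtain ⟨u, v, huv⟩ := h1 b hb1
            rw [huv]
            calc u * f b * v * f b * q * f b = u * (f b * v * f b * q * f b) := by
                  simp [mul_assoc]
              _ = u * (f b * v * f b * q) := by rw [← h (f b) v q]
              _ = u * f b * v * f b * q := by simp [mul_assoc]
          · rw [Function.update_of_ne hba] at hb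
            have := h2 b hb (f a * q)
            rw [← mul_assoc] at this
            exact this
      · rw [ini2Go, if_neg hc]
        have hpa : p * f a = p := by
          have := h2 a (by omega) 1
          simpa using this
        have : p * ((a :: l).map f).prod = p * (l.map f).prod := by
          simp only [List.map_cons, List.prod_cons, ← mul_assoc, hpa]
        rw [this]
        exact ih seen p h1 h2

theorem stmt3 {A : Type} [DecidableEq A] {M : Type*} [Monoid M]
    (h : ∀ x s t : M, x * s * x * t = x * s * x * t * x)
    (w : List A) (f : A → M) :
    (w.map f).prod = ((ini2 w).map f).prod := by
  have := ini2_aux h f w (fun _ => 0) 1 (by intro a ha; simp at ha)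
    (by intro a ha; simp at ha)
  simpa [ini2] using this
end

section
/- Let M be a monoid such that x·s·x·t = x·s·x·t·x for all x, s, t ∈ M, and suppose there exists n ≥ 2 with xⁿ = x for all x ∈ M. Then M satisfies x·y = x·y·x for all x, y ∈ M. -/
theorem stmt5 {M : Type*} [Monoid M]
    (h : ∀ x s t : M, x * s * x * t = x * s * x * t * x)
    (n : ℕ) (hn : 2 ≤ n) (hpow : ∀ x : M, x ^ n = x) :
    ∀ x y : M, x * y = x * y * x := by
  intro x y
  have key := h x (x ^ (n - 2)) y
  have hx : x * x ^ (n - 2) * x = x := by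
    rw [← pow_succ', ← pow_succ]
    have hn2 : n - 2 + 1 + 1 = n := by omega
    rw [hn2, hpow]
  rw [hx] at key
  exact key
end

section
/- Let M be a monoid satisfying x·s·x·t = x·s·x·t·x for all x, s, t ∈ M. Then M satisfies the identity κ₁: x·x₁·x·x₀·x₁ = x²·x₁·x₀·x₁ (for all x, x₀, x₁ ∈ M) if and only if M satisfies the identity δ₁¹: y₂·y₁·x₁·y₂·x₀·x₁·y₁ = y₂·y₁·y₂·x₁·x₀·x₁·y₁ (for all x₀, x₁, y₁, y₂ ∈ M). -/
theorem stmt6 {M : Type*} [Monoid M]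
    (h : ∀ x s t : M, x * s * x * t = x * s * x * t * x) :
    (∀ x x₀ x₁ : M, x * x₁ * x * x₀ * x₁ = x ^ 2 * x₁ * x₀ * x₁) ↔
      (∀ x₀ x₁ y₁ y₂ : M,
        y₂ * y₁ * x₁ * y₂ * x₀ * x₁ * y₁ = y₂ * y₁ * y₂ * x₁ * x₀ * x₁ * y₁) := by
  constructor
  · intro k x₀ x₁ y₁ y₂
    have k' : ∀ x p q : M, x * p * x * q * p = x * x * p * q * p := by
      intro x p q
      have := k x q p
      rwa [pow_two] at this
    calc y₂ * y₁ * x₁ * y₂ * x₀ * x₁ * y₁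
        = y₂ * y₁ * (x₁ * (y₂ * x₀) * x₁ * y₁) := by simp [mul_assoc]
      _ = y₂ * y₁ * (x₁ * (y₂ * x₀) * x₁ * y₁ * x₁) := by conv_lhs => rw [h x₁ (y₂ * x₀) y₁]
      _ = y₂ * (y₁ * x₁) * y₂ * (x₀ * x₁) * (y₁ * x₁) := by simp [mul_assoc]
      _ = y₂ * y₂ * (y₁ * x₁) * (x₀ * x₁) * (y₁ * x₁) := k' y₂ (y₁ * x₁) (x₀ * x₁)
      _ = y₂ * y₂ * y₁ * (x₁ * x₀ * x₁) * y₁ * x₁ := by simp [mul_assoc]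
      _ = y₂ * y₁ * y₂ * (x₁ * x₀ * x₁) * y₁ * x₁ := by
            rw [← k' y₂ y₁ (x₁ * x₀ * x₁)]
      _ = y₂ * y₁ * y₂ * (x₁ * x₀ * x₁ * y₁ * x₁) := by simp [mul_assoc]
      _ = y₂ * y₁ * y₂ * (x₁ * x₀ * x₁ * y₁) := by rw [← h x₁ x₀ y₁]
      _ = y₂ * y₁ * y₂ * x₁ * x₀ * x₁ * y₁ := by simp [mul_assoc]
  · intro d x x₀ x₁
    simpa [pow_two] using d x₀ x₁ 1 x
end

section
/- Let M be a monoid satisfying x·s·x·t = x·s·x·t·x (for all x, s, t ∈ M) and the identity δ₁¹: y₂·y₁·x₁·y₂·x₀·x₁·y₁ = y₂·y₁·y₂·x₁·x₀·x₁·y₁ (for all x₀, x₁, y₁, y₂ ∈ M). Then M satisfies the identity ε₁: y₂·x₁·x·y₂·x·x₀·x₁ = y₂·x₁·y₂·x²·x₀·x₁ (for all x, x₀, x₁, y₂ ∈ M). -/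
theorem stmt9 {M : Type*} [Monoid M]
    (h : ∀ x s t : M, x * s * x * t = x * s * x * t * x)
    (hδ : ∀ x₀ x₁ y₁ y₂ : M,
      y₂ * y₁ * x₁ * y₂ * x₀ * x₁ * y₁ = y₂ * y₁ * y₂ * x₁ * x₀ * x₁ * y₁) :
    ∀ x x₀ x₁ y₂ : M,
      y₂ * x₁ * x * y₂ * x * x₀ * x₁ = y₂ * x₁ * y₂ * x ^ 2 * x₀ * x₁ := by
  intro x x₀ x₁ y₂
  have h1 := hδ (x * x₀) x x₁ y₂
  have h2 := h x y₂ x₀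
  have h3 := h x 1 x₀
  simp only [mul_one] at h3
  have lhs : y₂ * x₁ * x * y₂ * x * x₀ * x₁ = y₂ * x₁ * x * y₂ * (x * x₀) * x * x₁ := by
    calc y₂ * x₁ * x * y₂ * x * x₀ * x₁
        = y₂ * x₁ * (x * y₂ * x * x₀) * x₁ := by group
      _ = y₂ * x₁ * (x * y₂ * x * x₀ * x) * x₁ := by rw [← h2]
      _ = y₂ * x₁ * x * y₂ * (x * x₀) * x * x₁ := by group
  have rhs : y₂ * x₁ * y₂ * x ^ 2 * x₀ * x₁ = y₂ * x₁ * y₂ * x * (x * x₀) * x * x₁ := by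
    calc y₂ * x₁ * y₂ * x ^ 2 * x₀ * x₁
        = y₂ * x₁ * y₂ * (x * x * x₀) * x₁ := by ring_nf; rw [pow_two]; group
      _ = y₂ * x₁ * y₂ * (x * x * x₀ * x) * x₁ := by rw [← h3]
      _ = y₂ * x₁ * y₂ * x * (x * x₀) * x * x₁ := by group
  rw [lhs, rhs, h1]
end

section
/- Let M be a monoid satisfying, for all elements: (i) x·s·x·t = x·s·x·t·x; (ii) δ₁¹: y₂·y₁·x₁·y₂·x₀·x₁·y₁ = y₂·y₁·y₂·x₁·x₀·x₁·y₁; and (iii) ε₀: y₁·x₀·x·y₁·x = y₁·x₀·y₁·x². Then M satisfies γ₂: y₁·y₀·x₂·y₁·x₁·x₂·x₀·x₁ = y₁·y₀·y₁·x₂·x₁·x₂·x₀·x₁ for all x₀, x₁, x₂, y₀, y₁ ∈ M. -/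
theorem stmt10 {M : Type*} [Monoid M]
    (h : ∀ x s t : M, x * s * x * t = x * s * x * t * x)
    (hδ : ∀ x₀ x₁ y₁ y₂ : M,
      y₂ * y₁ * x₁ * y₂ * x₀ * x₁ * y₁ = y₂ * y₁ * y₂ * x₁ * x₀ * x₁ * y₁)
    (hε : ∀ x x₀ y₁ : M, y₁ * x₀ * x * y₁ * x = y₁ * x₀ * y₁ * x ^ 2) :
    ∀ x₀ x₁ x₂ y₀ y₁ : M,
      y₁ * y₀ * x₂ * y₁ * x₁ * x₂ * x₀ * x₁ = y₁ * y₀ * y₁ * x₂ * x₁ * x₂ * x₀ * x₁ := by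
  intro x₀ x₁ x₂ y₀ y₁
  -- work in right-associated form
  have e1 : y₁ * (y₀ * (x₂ * (y₁ * (x₁ * (x₂ * (x₀ * x₁)))))) =
      y₁ * (y₀ * (x₂ * (y₁ * (x₁ * (x₂ * (x₀ * (x₁ * y₁))))))) := by
    have := h y₁ (y₀ * x₂) (x₁ * (x₂ * (x₀ * x₁)))
    simpa [mul_assoc] using this
  have e2 : x₂ * (y₁ * (x₁ * (x₂ * (x₀ * (x₁ * y₁))))) =
      x₂ * (y₁ * (x₂ * (x₁ * (x₀ * (x₁ * y₁))))) := by
    have := hδ x₀ x₁ y₁ x₂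
    simpa [mul_assoc] using this
  have e3 : y₁ * (y₀ * (x₂ * (y₁ * (x₂ * (x₁ * (x₀ * (x₁ * y₁))))))) =
      y₁ * (y₀ * (y₁ * (x₂ * (x₂ * (x₁ * (x₀ * (x₁ * y₁))))))) := by
    have := congrArg (· * (x₁ * (x₀ * (x₁ * y₁)))) (hε x₂ y₀ y₁)
    simpa [mul_assoc, pow_two] using this
  have eκ : x₂ * (x₂ * (x₁ * (x₀ * (x₁ * y₁)))) =
      x₂ * (x₁ * (x₂ * (x₀ * (x₁ * y₁)))) := by
    have := congrArg (· * y₁) (hδ x₀ x₁ 1 x₂)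
    simpa [mul_assoc] using this.symm
  have e4 : y₁ * (y₀ * (y₁ * (x₂ * (x₁ * (x₂ * (x₀ * x₁)))))) =
      y₁ * (y₀ * (y₁ * (x₂ * (x₁ * (x₂ * (x₀ * (x₁ * y₁))))))) := by
    have := h y₁ y₀ (x₂ * (x₁ * (x₂ * (x₀ * x₁))))
    simpa [mul_assoc] using this
  have : y₁ * (y₀ * (x₂ * (y₁ * (x₁ * (x₂ * (x₀ * x₁)))))) =
      y₁ * (y₀ * (y₁ * (x₂ * (x₁ * (x₂ * (x₀ * x₁)))))) := by
    rw [e1, e2, e3, eκ, ← e4]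
  simpa [mul_assoc] using this
end

section
/- Let A be an alphabet and let a, b, X, S, T be words over A with X nonempty. Then ini₂(a · X · S · X · T · b) = ini₂(a · X · S · X · T · X · b), where ini₂(w) is the word obtained from w by retaining only the first two occurrences of each letter. Consequently, any identity directly deducible from the identity xsxt ≈ xsxtx preserves ini₂. -/
/-- The state of the `seen` counter after processing a word. -/
def ini2After {A : Type} [DecidableEq A] : (A → ℕ) → List A → (A → ℕ)
  | seen, [] => seen
  | seen, a :: l =>
      ini2After (if seen a < 2 then Function.update seen a (seen a + 1) else seen) l

lemma ini2Go_append {A : Type} [DecidableEq A] (seen : A → ℕ) (u v : List A) :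
    ini2Go seen (u ++ v) = ini2Go seen u ++ ini2Go (ini2After seen u) v := by
  induction u generalizing seen with
  | nil => rfl
  | cons x l ih =>
    by_cases h : seen x < 2
    · simp [ini2Go, ini2After, h, ih]
    · simp [ini2Go, ini2After, h, ih]

lemma le_ini2After {A : Type} [DecidableEq A] (seen : A → ℕ) (u : List A) (x : A) :
    seen x ≤ ini2After seen u x := by
  induction u generalizing seen with
  | nil => exact le_refl _
  | cons y l ih =>
    refine le_trans ?_ (ih _)
    by_cases h : seen y < 2 <;> simp [h, Function.update]
    split <;> simp_all

lemma count_le_ini2After {A : Type} [DecidableEq A] (seen : A → ℕ) (u : List A) (x : A) :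
    min 2 (seen x + u.count x) ≤ ini2After seen u x := by
  induction u generalizing seen with
  | nil =>
    simp only [ini2After, List.count_nil, Nat.add_zero]
    exact min_le_right _ _
  | cons y l ih =>
    simp only [ini2After]
    by_cases hy : y = x
    · subst hy
      by_cases h : seen y < 2
      · simp only [if_pos h]
        refine le_trans ?_ (ih _)
        simp [Function.update_self, List.count_cons]
        omega
      · refine le_trans ?_ (le_ini2After _ l y)
        simp only [if_neg h]
        omega
    · have hc : (y :: l).count x = l.count x := by
        simp [List.count_cons, hy]
      rw [hc]
      refine le_trans ?_ (ih _)
      split <;> simp [Function.update, hy]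
      split <;> simp_all
lemma ini2Go_of_seen {A : Type} [DecidableEq A] (seen : A → ℕ) (u v : List A)
    (h : ∀ x ∈ u, 2 ≤ seen x) :
    ini2Go seen (u ++ v) = ini2Go seen v := by
  induction u with
  | nil => rfl
  | cons y l ih =>
    have hy : ¬ seen y < 2 := by have := h y (by simp); omega
    simp only [List.cons_append, ini2Go, if_neg hy]
    exact ih (fun x hx => h x (by simp [hx]))

theorem stmt11 {A : Type} [DecidableEq A] (a b X S T : List A) (hX : X ≠ []) :
    ini2 (a ++ X ++ S ++ X ++ T ++ b) = ini2 (a ++ X ++ S ++ X ++ T ++ X ++ b) := by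
  have h2 : a ++ X ++ S ++ X ++ T ++ X ++ b = (a ++ X ++ S ++ X ++ T) ++ (X ++ b) := by
    simp [List.append_assoc]
  unfold ini2
  rw [h2, ini2Go_append (fun _ => 0) (a ++ X ++ S ++ X ++ T) b,
    ini2Go_append (fun _ => 0) (a ++ X ++ S ++ X ++ T) (X ++ b)]
  congr 1
  rw [ini2Go_of_seen]
  intro x hx
  have hc1 : 1 ≤ X.count x := List.one_le_count_iff.mpr hx
  have hcount : 2 ≤ (a ++ X ++ S ++ X ++ T).count x := by
    simp only [List.count_append]
    omega
  have := count_le_ini2After (fun _ => (0:ℕ)) (a ++ X ++ S ++ X ++ T) x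
  simp only [zero_add] at this
  omega
end

section
/- There exists a monoid of order five that satisfies the identity x·s·x·t = x·s·x·t·x for all its elements but does not satisfy the identity (x·y)² = x²·y². Concretely, the monoid P₂¹ with elements {1, a, b, c, d} (where c = b·a and d = b²) and multiplication given by: 1 is the identity; a·a = a·b = a·c = a·d = a; b·a = c, b·b = d, b·c = d, b·d = d; c·z = c for all z ∈ {a, b, c, d}; d·z = d for all z ∈ {a, b, c, d}, is such a monoid: it satisfies xsxt = xsxtx, yet (b·a)² = c while b²·a² = d, so (b·a)² ≠ b²·a². -/
/-- The five-element monoid `P₂¹ = ⟨a, b, 1 ∣ a² = ab = a, b²a = b², b³ = b²⟩`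
with elements `1, a, b, c = b·a, d = b²`. -/
inductive P21 : Type
  | one | a | b | c | d
  deriving DecidableEq

instance : Fintype P21 where
  elems := {P21.one, P21.a, P21.b, P21.c, P21.d}
  complete := by intro x; cases x <;> decide

namespace P21

/-- Multiplication of `P₂¹`. -/
def mul : P21 → P21 → P21
  | one, x => x
  | x, one => x
  | a, _ => a
  | b, a => c
  | b, b => d
  | b, c => d
  | b, d => d
  | c, _ => c
  | d, _ => d

instance : Monoid P21 where
  mul := mul
  one := one
  one_mul := by intro x; cases x <;> rfl
  mul_one := by intro x; cases x <;> rfl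
  mul_assoc := by decide

end P21

/-!
The elements `a`, `c`, `d` of `P₂¹` are left zeros, and `x s x` is one of them whenever `x ≠ 1`
(for `x = b` it is `c` or `d`). So for `x ≠ 1` both sides of `x s x t = x s x t x` collapse to
`x s x`, while for `x = 1` the identity is trivial. The identity `(xy)² = x²y²` fails at `x = b`,
`y = a`, where `(ba)² = c` but `b²a² = d`.
-/

namespace P21

theorem mul_eq_left_of_mem {z : P21} (hz : z = a ∨ z = c ∨ z = d) (y : P21) : z * y = z := by
  rcases hz with rfl | rfl | rfl <;> cases y <;> rfl

theorem mul_mul_self_mem (x s : P21) (hx : x ≠ 1) :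
    x * s * x = a ∨ x * s * x = c ∨ x * s * x = d := by
  revert x s; decide

theorem mul_mul_self_mul_mul_self (x s t : P21) : x * s * x * t = x * s * x * t * x := by
  rcases eq_or_ne x 1 with rfl | hx
  · simp
  · have hleft := mul_eq_left_of_mem (mul_mul_self_mem x s hx)
    rw [hleft, hleft]

end P21

theorem stmt12 :
    Fintype.card P21 = 5 ∧
    (∀ x s t : P21, x * s * x * t = x * s * x * t * x) ∧
    P21.c = P21.b * P21.a ∧ P21.d = P21.b ^ 2 ∧
    (P21.b * P21.a) ^ 2 = P21.c ∧ P21.b ^ 2 * P21.a ^ 2 = P21.d ∧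
    (P21.b * P21.a) ^ 2 ≠ P21.b ^ 2 * P21.a ^ 2 ∧
    ¬ (∀ x y : P21, (x * y) ^ 2 = x ^ 2 * y ^ 2) := by
  have hsq : (P21.b * P21.a) ^ 2 = P21.c := rfl
  have hsq' : P21.b ^ 2 * P21.a ^ 2 = P21.d := rfl
  have hne : (P21.b * P21.a) ^ 2 ≠ P21.b ^ 2 * P21.a ^ 2 := by rw [hsq, hsq']; decide
  exact ⟨rfl, P21.mul_mul_self_mul_mul_self, rfl, rfl, hsq, hsq', hne, fun h => hne (h _ _)⟩
end

section
/- Let M be a monoid satisfying x·s·x·t = x·s·x·t·x for all x, s, t ∈ M, and satisfying x²·(y²·x²)² = (y²·x²)² for all x, y ∈ M. Then M satisfies x²·y² = y²·x² for all x, y ∈ M. -/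
theorem stmt16 {M : Type*} [Monoid M]
    (h : ∀ x s t : M, x * s * x * t = x * s * x * t * x)
    (h2 : ∀ x y : M, x ^ 2 * (y ^ 2 * x ^ 2) ^ 2 = (y ^ 2 * x ^ 2) ^ 2) :
    ∀ x y : M, x ^ 2 * y ^ 2 = y ^ 2 * x ^ 2 := by
  -- squaring lemma: a²b² = (a²b²)²
  have G : ∀ x y : M, x ^ 2 * y ^ 2 = (x ^ 2 * y ^ 2) ^ 2 := by
    intro x y
    have s1 : x * x * y * y = x * x * y * y * x := by
      simpa [mul_assoc] using h x 1 (y * y)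
    have s2 : x * x * y * y * x = x * x * y * y * x * x := by
      simpa [mul_assoc] using h x (x * y * y) 1
    have s3 : x * x * y * y * x * x = x * x * y * y * x * x * y := by
      simpa [mul_assoc] using congrArg (fun z => x * x * z) (h y 1 (x * x))
    have s4 : x * x * y * y * x * x * y = x * x * y * y * x * x * y * y := by
      simpa [mul_assoc] using congrArg (fun z => x * x * z) (h y 1 (x * x * y))
    calc x ^ 2 * y ^ 2 = x * x * y * y := by simp [pow_two, mul_assoc]
      _ = x * x * y * y * x * x * y * y := s1.trans (s2.trans (s3.trans s4))
      _ = (x ^ 2 * y ^ 2) ^ 2 := by simp [pow_two, mul_assoc]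
  have F : ∀ x y : M, x ^ 2 * y ^ 2 = (y ^ 2 * x ^ 2) ^ 2 := by
    intro x y
    have s5 : x * x * y * y * x * x * y * y = x * x * y * y * x * x * y * y * x := by
      simpa [mul_assoc] using h x 1 (y * y * x * x * y * y)
    have s6 : x * x * y * y * x * x * y * y * x
        = x * x * y * y * x * x * y * y * x * x := by
      simpa [mul_assoc] using h x (x * y * y * x * x * y * y) 1
    calc x ^ 2 * y ^ 2 = (x ^ 2 * y ^ 2) ^ 2 := G x y
      _ = x * x * y * y * x * x * y * y := by simp [pow_two, mul_assoc]
      _ = x * x * y * y * x * x * y * y * x * x := s5.trans s6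
      _ = x ^ 2 * (y ^ 2 * x ^ 2) ^ 2 := by simp [pow_two, mul_assoc]
      _ = (y ^ 2 * x ^ 2) ^ 2 := h2 x y
  intro x y
  calc x ^ 2 * y ^ 2 = (y ^ 2 * x ^ 2) ^ 2 := F x y
    _ = y ^ 2 * x ^ 2 := (G y x).symm
end

section
/- Let M be a monoid satisfying x·s·x·t = x·s·x·t·x for all x, s, t ∈ M and satisfying the identity κ₁: x·x₁·x·x₀·x₁ = x²·x₁·x₀·x₁ for all x, x₀, x₁ ∈ M. Then M satisfies the identity ε₁: y₂·x₁·x·y₂·x·x₀·x₁ = y₂·x₁·y₂·x²·x₀·x₁ for all x, x₀, x₁, y₂ ∈ M. -/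
theorem stmt18 {M : Type*} [Monoid M]
    (h : ∀ x s t : M, x * s * x * t = x * s * x * t * x)
    (hκ : ∀ x x₀ x₁ : M, x * x₁ * x * x₀ * x₁ = x ^ 2 * x₁ * x₀ * x₁) :
    ∀ x x₀ x₁ y₂ : M,
      y₂ * x₁ * x * y₂ * x * x₀ * x₁ = y₂ * x₁ * y₂ * x ^ 2 * x₀ * x₁ := by
  intro x x₀ x₁ y₂
  have e1 : y₂ * x₁ * x * y₂ * x * x₀ * x₁ = y₂ * x₁ * x * y₂ * x * x₀ * x₁ * x := by
    have := congrArg (y₂ * x₁ * ·) (h x y₂ (x₀ * x₁))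
    simpa [mul_assoc] using this
  have e2 : y₂ * x₁ * x * y₂ * x * x₀ * x₁ * x = y₂ ^ 2 * x₁ * x * x * x₀ * x₁ * x := by
    have := hκ y₂ (x * x₀) (x₁ * x)
    simpa [mul_assoc, pow_two] using this
  have e3 : y₂ ^ 2 * x₁ * x * x * x₀ * x₁ * x = y₂ ^ 2 * x₁ * x * x * x₀ * x₁ := by
    have := congrArg (y₂ ^ 2 * x₁ * ·) (h x 1 (x₀ * x₁))
    simpa [mul_assoc, pow_two] using this.symm
  have e4 : y₂ * x₁ * y₂ * x ^ 2 * x₀ * x₁ = y₂ ^ 2 * x₁ * x * x * x₀ * x₁ := by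
    have := hκ y₂ (x ^ 2 * x₀) x₁
    simpa [mul_assoc, pow_two] using this
  rw [e1, e2, e3, e4]
end
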